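/- arXiv:2605.29635 — 7 statements merged into one kernel-verified Lean document; each statement's English description precedes it below -/
import Mathlib

section
/- Let φ be m_φ-weakly convex, g proper closed convex, and 0 < μ < 1/m_φ. Then the gradient of Ψ_μ := M_{μφ} − M_{μg} is Lipschitz continuous with constant (2 − μm_φ)/(μ − μ²m_φ). -/
/-!
For `μ m < 1`, completing the square turns the proximal problem of the `m`-weakly convex `φ`
at `z` into that of the convex `φ + (m/2)‖·‖²` at `(1 - μ m)⁻¹ z` with the smaller weight
`(1 - μ m) / (2μ)`. Firm nonexpansiveness of convex proximal maps then makes `prox_{μφ}`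
`(1 - μ m)⁻¹`-Lipschitz, `prox_{μg}` is `1`-Lipschitz (the case `m = 0`), and the triangle
inequality bounds `μ⁻¹ (prox_{μg} − prox_{μφ})` by `μ⁻¹ (1 + (1 - μ m)⁻¹) = (2 - μ m)/(μ - μ² m)`.
-/

open scoped RealInnerProductSpace

open Filter Set

variable {E : Type*} [NormedAddCommGroup E] [InnerProductSpace ℝ E]

lemma nonneg_of_forall_Ioc_add_mul_nonneg {a b : ℝ} (h : ∀ t ∈ Ioc (0 : ℝ) 1, 0 ≤ a + t * b) :
    0 ≤ a := by
  have hlim : Tendsto (fun t : ℝ => a + t * b) (nhdsWithin 0 (Ioi 0)) (nhds a) :=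
    tendsto_nhdsWithin_of_tendsto_nhds <| by
      simpa using (tendsto_const_nhds (x := a)).add ((tendsto_id (x := nhds (0 : ℝ))).mul
        (tendsto_const_nhds (x := b)))
  exact ge_of_tendsto hlim <| eventually_of_mem (Ioc_mem_nhdsGT one_pos) h

lemma ConvexOn.le_add_inner_of_prox {f : E → ℝ} (hf : ConvexOn ℝ univ f) {c : ℝ}
    {p z : E} (hp : ∀ y, f p + c * ‖p - z‖ ^ 2 ≤ f y + c * ‖y - z‖ ^ 2) (q : E) :
    f p ≤ f q + 2 * c * ⟪p - z, q - p⟫ := by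
  suffices 0 ≤ f q - f p + 2 * c * ⟪p - z, q - p⟫ by linarith
  refine nonneg_of_forall_Ioc_add_mul_nonneg (b := c * ‖q - p‖ ^ 2) fun t ⟨ht0, ht1⟩ => ?_
  have hconv : f ((1 - t) • p + t • q) ≤ (1 - t) * f p + t * f q := by
    simpa using hf.2 (mem_univ p) (mem_univ q) (sub_nonneg.2 ht1) ht0.le (by ring)
  have hsq : ‖(1 - t) • p + t • q - z‖ ^ 2
      = ‖p - z‖ ^ 2 + t * (2 * ⟪p - z, q - p⟫) + t ^ 2 * ‖q - p‖ ^ 2 := by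
    rw [show (1 - t) • p + t • q - z = (p - z) + t • (q - p) by module, norm_add_sq_real,
      real_inner_smul_right, norm_smul, Real.norm_eq_abs, abs_of_pos ht0]
    ring
  have hmin := hp ((1 - t) • p + t • q)
  rw [hsq] at hmin
  nlinarith

lemma ConvexOn.norm_sub_sq_le_inner_of_prox {f : E → ℝ} (hf : ConvexOn ℝ univ f) {c : ℝ}
    (hc : 0 < c) {prox : E → E}
    (hprox : ∀ z y, f (prox z) + c * ‖prox z - z‖ ^ 2 ≤ f y + c * ‖y - z‖ ^ 2) (z z' : E) :
    ‖prox z - prox z'‖ ^ 2 ≤ ⟪z - z', prox z - prox z'⟫ := by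
  have h := hf.le_add_inner_of_prox (hprox z) (prox z')
  have h' := hf.le_add_inner_of_prox (hprox z') (prox z)
  have hsum : ⟪prox z - z, prox z' - prox z⟫ + ⟪prox z' - z', prox z - prox z'⟫
      = ⟪z - z', prox z - prox z'⟫ - ‖prox z - prox z'‖ ^ 2 := by
    rw [← real_inner_self_eq_norm_sq]
    simp only [inner_sub_left, inner_sub_right, real_inner_comm (prox z) (prox z')]
    ring
  nlinarith

lemma norm_le_mul_of_norm_sq_le_mul_inner {u v : E} {K : ℝ} (hK : 0 ≤ K)
    (h : ‖u‖ ^ 2 ≤ K * ⟪v, u⟫) : ‖u‖ ≤ K * ‖v‖ := by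
  rcases (norm_nonneg u).eq_or_lt with hu | hu
  · rw [← hu]; positivity
  · have hcs := mul_le_mul_of_nonneg_left (real_inner_le_norm v u) hK
    nlinarith

lemma norm_prox_sub_le_of_weaklyConvex {f : E → ℝ} {m μ : ℝ} (hμ : 0 < μ) (hμm : μ * m < 1)
    (hf : ConvexOn ℝ univ fun x => f x + m / 2 * ‖x‖ ^ 2) {prox : E → E}
    (hprox : ∀ z y, f (prox z) + 1 / (2 * μ) * ‖prox z - z‖ ^ 2 ≤
      f y + 1 / (2 * μ) * ‖y - z‖ ^ 2) (z z' : E) :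
    ‖prox z - prox z'‖ ≤ (1 - μ * m)⁻¹ * ‖z - z'‖ := by
  set l := 1 - μ * m
  have hl : 0 < l := sub_pos.2 hμm
  have hsquare : ∀ z y : E, f y + m / 2 * ‖y‖ ^ 2 + l / (2 * μ) * ‖y - l⁻¹ • z‖ ^ 2
      = f y + 1 / (2 * μ) * ‖y - z‖ ^ 2 + (l⁻¹ - 1) / (2 * μ) * ‖z‖ ^ 2 := by
    intro z y
    have hl_def : l = 1 - μ * m := rfl
    rw [norm_sub_sq_real, norm_sub_sq_real, real_inner_smul_right, norm_smul,
      Real.norm_eq_abs, abs_of_pos (inv_pos.2 hl)]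
    field_simp
    rw [hl_def]
    ring
  have hprox' : ∀ z y, (f (prox z) + m / 2 * ‖prox z‖ ^ 2)
      + l / (2 * μ) * ‖prox z - l⁻¹ • z‖ ^ 2 ≤
      (f y + m / 2 * ‖y‖ ^ 2) + l / (2 * μ) * ‖y - l⁻¹ • z‖ ^ 2 := by
    intro z y
    rw [hsquare, hsquare]
    linarith [hprox z y]
  have hfirm := hf.norm_sub_sq_le_inner_of_prox (c := l / (2 * μ)) (by positivity) (z := l⁻¹ • z) (z' := l⁻¹ • z')
    (prox := fun w => prox (l • w)) (fun w y => by simpa [smul_smul, hl.ne'] using hprox' (l • w) y)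
  simp only [smul_smul, mul_inv_cancel₀ hl.ne', one_smul, ← smul_sub, real_inner_smul_left]
    at hfirm
  exact norm_le_mul_of_norm_sq_le_mul_inner (inv_nonneg.2 hl.le) hfirm

theorem stmt5_general {n : ℕ} (φ g : EuclideanSpace ℝ (Fin n) → ℝ) (mφ μ : ℝ)
    (hm : 0 < mφ) (hμ : 0 < μ) (hμm : μ < 1 / mφ)
    (hφweak : ConvexOn ℝ Set.univ (fun x => φ x + mφ / 2 * ‖x‖ ^ 2))
    (hgconv : ConvexOn ℝ Set.univ g)
    (proxφ proxg : EuclideanSpace ℝ (Fin n) → EuclideanSpace ℝ (Fin n))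
    (hproxφ : ∀ z y, φ (proxφ z) + 1 / (2 * μ) * ‖proxφ z - z‖ ^ 2 ≤
      φ y + 1 / (2 * μ) * ‖y - z‖ ^ 2)
    (hproxg : ∀ z y, g (proxg z) + 1 / (2 * μ) * ‖proxg z - z‖ ^ 2 ≤
      g y + 1 / (2 * μ) * ‖y - z‖ ^ 2) :
    ∀ z z', ‖(1 / μ) • (proxg z - proxφ z) - (1 / μ) • (proxg z' - proxφ z')‖ ≤
      ((2 - μ * mφ) / (μ - μ ^ 2 * mφ)) * ‖z - z'‖ := by
  intro z z'
  have hμm' : μ * mφ < 1 := by rwa [lt_div_iff₀ hm] at hμm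
  have hg : ‖proxg z - proxg z'‖ ≤ ‖z - z'‖ := by
    simpa using norm_prox_sub_le_of_weaklyConvex (m := 0) hμ (by simp) (by simpa using hgconv)
      hproxg z z'
  have hφ := norm_prox_sub_le_of_weaklyConvex hμ hμm' hφweak hproxφ z z'
  have hconst : 1 / μ * (1 + (1 - μ * mφ)⁻¹) = (2 - μ * mφ) / (μ - μ ^ 2 * mφ) := by
    have : 1 - μ * mφ ≠ 0 := (sub_pos.2 hμm').ne'
    field_simp
    ring
  calc ‖(1 / μ) • (proxg z - proxφ z) - (1 / μ) • (proxg z' - proxφ z')‖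
      = 1 / μ * ‖(proxg z - proxg z') - (proxφ z - proxφ z')‖ := by
        rw [← smul_sub, norm_smul, Real.norm_of_nonneg (by positivity)]
        congr 2
        abel
    _ ≤ 1 / μ * (‖z - z'‖ + (1 - μ * mφ)⁻¹ * ‖z - z'‖) := by
        gcongr
        exact (norm_sub_le _ _).trans (add_le_add hg hφ)
    _ = (2 - μ * mφ) / (μ - μ ^ 2 * mφ) * ‖z - z'‖ := by rw [← hconst]; ring

/-- The gradient `∇Ψ_μ(z) = μ⁻¹(prox_{μg}(z) − prox_{μφ}(z))` of the DME
smoothing is Lipschitz continuous with constant `(2 − μ m_φ)/(μ − μ² m_φ)`. -/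
theorem stmt5 {n : ℕ} (φ g : EuclideanSpace ℝ (Fin n) → ℝ) (mφ μ : ℝ)
    (hm : 0 < mφ) (hμ : 0 < μ) (hμm : μ < 1 / mφ)
    (hφclosed : LowerSemicontinuous φ)
    (hφweak : ConvexOn ℝ Set.univ (fun x => φ x + mφ / 2 * ‖x‖ ^ 2))
    (hgconv : ConvexOn ℝ Set.univ g) (hgclosed : LowerSemicontinuous g)
    (proxφ proxg : EuclideanSpace ℝ (Fin n) → EuclideanSpace ℝ (Fin n))
    (hproxφ : ∀ z y, φ (proxφ z) + 1 / (2 * μ) * ‖proxφ z - z‖ ^ 2 ≤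
      φ y + 1 / (2 * μ) * ‖y - z‖ ^ 2)
    (hproxg : ∀ z y, g (proxg z) + 1 / (2 * μ) * ‖proxg z - z‖ ^ 2 ≤
      g y + 1 / (2 * μ) * ‖y - z‖ ^ 2) :
    ∀ z z', ‖(1 / μ) • (proxg z - proxφ z) - (1 / μ) • (proxg z' - proxφ z')‖ ≤
      ((2 - μ * mφ) / (μ - μ ^ 2 * mφ)) * ‖z - z'‖ :=
  stmt5_general φ g mφ μ hm hμ hμm hφweak hgconv proxφ proxg hproxφ hproxg
end

section
/- Given ε > 0, φ m_φ-weakly convex, g proper closed convex, and 0 < μ < 1/m_φ: if z̄ satisfies ‖∇Ψ_μ(z̄)‖ ≤ min{1, μ⁻¹}·ε, then x̄ := prox_{μφ}(z̄) is an ε-critical point of Ψ = φ − g with auxiliary point ȳ := prox_{μg}(z̄); that is, there exists ū ∈ ∂φ(x̄) − ∂g(ȳ) with max{‖ū‖, ‖x̄ − ȳ‖} ≤ ε. -/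
open scoped RealInnerProductSpace

/-! Optimality of a proximal point `p` of `z` gives the quadratic minorant
`f y ≥ f p + ⟪μ⁻¹(z - p), y - p⟫ - (2μ)⁻¹‖y - p‖²`, so `μ⁻¹(z - p)` is a Fréchet subgradient of `f`
at `p`. The two subgradients `μ⁻¹(z̄ - x̄) ∈ ∂φ(x̄)` and `μ⁻¹(z̄ - ȳ) ∈ ∂g(ȳ)` differ by `∇Ψ_μ(z̄)`,
while `x̄ - ȳ = -μ ∇Ψ_μ(z̄)`; the factor `min 1 μ⁻¹` bounds both by `ε`. -/

/-- `v` is a general (Fréchet-type) subgradient of `φ` at `x`. -/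
def IsGenSubgradientAt {n : ℕ} (φ : EuclideanSpace ℝ (Fin n) → ℝ)
    (v x : EuclideanSpace ℝ (Fin n)) : Prop :=
  ∀ ε > (0 : ℝ), ∀ᶠ y in nhds x, φ x + ⟪v, y - x⟫ - ε * ‖y - x‖ ≤ φ y

section

variable {n : ℕ}

def IsProxPoint (f : EuclideanSpace ℝ (Fin n) → ℝ) (μ : ℝ) (z p : EuclideanSpace ℝ (Fin n)) :
    Prop :=
  ∀ y, f p + 1 / (2 * μ) * ‖p - z‖ ^ 2 ≤ f y + 1 / (2 * μ) * ‖y - z‖ ^ 2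

theorem IsGenSubgradientAt.of_forall_quadratic_le {f : EuclideanSpace ℝ (Fin n) → ℝ}
    {v x : EuclideanSpace ℝ (Fin n)} {c : ℝ}
    (h : ∀ y, f x + ⟪v, y - x⟫ - c * ‖y - x‖ ^ 2 ≤ f y) : IsGenSubgradientAt f v x := by
  intro ε hε
  filter_upwards [Metric.ball_mem_nhds x (show 0 < ε / (|c| + 1) by positivity)] with y hy
  have hdist : ‖y - x‖ * (|c| + 1) < ε := by
    rw [Metric.mem_ball, dist_eq_norm, lt_div_iff₀ (by positivity)] at hy
    exact hy
  have hquad : c * ‖y - x‖ ^ 2 ≤ ε * ‖y - x‖ := by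
    nlinarith [le_abs_self c, norm_nonneg (y - x), abs_nonneg c]
  linarith [h y]

theorem forall_quadratic_le_of_isProxPoint {f : EuclideanSpace ℝ (Fin n) → ℝ} {μ : ℝ}
    {z p : EuclideanSpace ℝ (Fin n)}
    (h : IsProxPoint f μ z p) (y) :
    f p + ⟪(1 / μ) • (z - p), y - p⟫ - 1 / (2 * μ) * ‖y - p‖ ^ 2 ≤ f y := by
  have hexpand : ‖y - z‖ ^ 2 = ‖y - p‖ ^ 2 - 2 * ⟪z - p, y - p⟫ + ‖p - z‖ ^ 2 := by
    rw [← sub_add_sub_cancel y p z, norm_add_sq_real, ← neg_sub z p, inner_neg_right,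
      real_inner_comm]
    ring
  have hinner : ⟪(1 / μ) • (z - p), y - p⟫ = 1 / (2 * μ) * (2 * ⟪z - p, y - p⟫) := by
    rw [real_inner_smul_left]
    ring
  rw [hinner]
  linear_combination h y + 1 / (2 * μ) * hexpand

theorem isGenSubgradientAt_of_isProxPoint {f : EuclideanSpace ℝ (Fin n) → ℝ} {μ : ℝ}
    {z p : EuclideanSpace ℝ (Fin n)}
    (h : IsProxPoint f μ z p) :
    IsGenSubgradientAt f ((1 / μ) • (z - p)) p :=
  .of_forall_quadratic_le (forall_quadratic_le_of_isProxPoint h)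

end

theorem stmt7_general {n : ℕ} (φ g : EuclideanSpace ℝ (Fin n) → ℝ) (μ ε : ℝ)
    (hε : 0 < ε) (hμ : 0 < μ)
    (proxφ proxg : EuclideanSpace ℝ (Fin n) → EuclideanSpace ℝ (Fin n))
    (hproxφ : ∀ z y, φ (proxφ z) + 1 / (2 * μ) * ‖proxφ z - z‖ ^ 2 ≤
      φ y + 1 / (2 * μ) * ‖y - z‖ ^ 2)
    (hproxg : ∀ z y, g (proxg z) + 1 / (2 * μ) * ‖proxg z - z‖ ^ 2 ≤
      g y + 1 / (2 * μ) * ‖y - z‖ ^ 2)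
    (zbar : EuclideanSpace ℝ (Fin n))
    (hgrad : ‖(1 / μ) • (proxg zbar - proxφ zbar)‖ ≤ min 1 μ⁻¹ * ε) :
    ∃ u₁ u₂ : EuclideanSpace ℝ (Fin n),
      IsGenSubgradientAt φ u₁ (proxφ zbar) ∧ IsGenSubgradientAt g u₂ (proxg zbar) ∧
      max ‖u₁ - u₂‖ ‖proxφ zbar - proxg zbar‖ ≤ ε := by
  set x := proxφ zbar
  set y := proxg zbar
  refine ⟨(1 / μ) • (zbar - x), (1 / μ) • (zbar - y), isGenSubgradientAt_of_isProxPoint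
    (hproxφ zbar), isGenSubgradientAt_of_isProxPoint (hproxg zbar), max_le ?_ ?_⟩
  · calc ‖(1 / μ) • (zbar - x) - (1 / μ) • (zbar - y)‖
        = ‖(1 / μ) • (y - x)‖ := by rw [← smul_sub, sub_sub_sub_cancel_left]
      _ ≤ min 1 μ⁻¹ * ε := hgrad
      _ ≤ 1 * ε := by gcongr; exact min_le_left _ _
      _ = ε := one_mul ε
  · calc ‖x - y‖ = μ * ‖(1 / μ) • (y - x)‖ := by
          rw [norm_smul, norm_sub_rev, Real.norm_of_nonneg (by positivity), ← mul_assoc,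
            mul_one_div_cancel hμ.ne', one_mul]
      _ ≤ μ * (μ⁻¹ * ε) := by gcongr; exact hgrad.trans (by gcongr; exact min_le_right _ _)
      _ = ε := by field_simp

/-- If `‖∇Ψ_μ(zbar)‖ ≤ min{1, μ⁻¹}ε` then `xbar = prox_{μφ}(zbar)` is an ε-critical
point of `Ψ = φ − g` with auxiliary point `ȳ = prox_{μg}(zbar)`: there exists
`ū ∈ ∂φ(xbar) − ∂g(ȳ)` with `max{‖ū‖, ‖xbar − ȳ‖} ≤ ε`. -/
theorem stmt7 {n : ℕ} (φ g : EuclideanSpace ℝ (Fin n) → ℝ) (mφ μ ε : ℝ)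
    (hε : 0 < ε) (hm : 0 < mφ) (hμ : 0 < μ) (hμm : μ < 1 / mφ)
    (hφclosed : LowerSemicontinuous φ)
    (hφweak : ConvexOn ℝ Set.univ (fun x => φ x + mφ / 2 * ‖x‖ ^ 2))
    (hgconv : ConvexOn ℝ Set.univ g) (hgclosed : LowerSemicontinuous g)
    (proxφ proxg : EuclideanSpace ℝ (Fin n) → EuclideanSpace ℝ (Fin n))
    (hproxφ : ∀ z y, φ (proxφ z) + 1 / (2 * μ) * ‖proxφ z - z‖ ^ 2 ≤
      φ y + 1 / (2 * μ) * ‖y - z‖ ^ 2)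
    (hproxg : ∀ z y, g (proxg z) + 1 / (2 * μ) * ‖proxg z - z‖ ^ 2 ≤
      g y + 1 / (2 * μ) * ‖y - z‖ ^ 2)
    (zbar : EuclideanSpace ℝ (Fin n))
    (hgrad : ‖(1 / μ) • (proxg zbar - proxφ zbar)‖ ≤ min 1 μ⁻¹ * ε) :
    ∃ u₁ u₂ : EuclideanSpace ℝ (Fin n),
      IsGenSubgradientAt φ u₁ (proxφ zbar) ∧ IsGenSubgradientAt g u₂ (proxg zbar) ∧
      max ‖u₁ - u₂‖ ‖proxφ zbar - proxg zbar‖ ≤ ε :=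
  stmt7_general φ g μ ε hε hμ proxφ proxg hproxφ hproxg zbar hgrad
end

section
/- Let z̄ be a stationary point of Ψ_μ = M_{μφ} − M_{μg} (i.e., ∇Ψ_μ(z̄) = 0), where φ is m_φ-weakly convex, g proper closed convex, and 0 < μ < 1/m_φ. Then prox_{μφ}(z̄) = prox_{μg}(z̄), the point x̄ := prox_{μφ}(z̄) is a critical point of Ψ = φ − g (i.e., ∂φ(x̄) ∩ ∂g(x̄) ≠ ∅), and Ψ(x̄) = Ψ_μ(z̄). -/
open scoped RealInnerProductSpace

lemma aux_subgrad {n : ℕ} (f : EuclideanSpace ℝ (Fin n) → ℝ) (μ : ℝ) (hμ : 0 < μ)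
    (x z : EuclideanSpace ℝ (Fin n))
    (h : ∀ y, f x + 1 / (2 * μ) * ‖x - z‖ ^ 2 ≤ f y + 1 / (2 * μ) * ‖y - z‖ ^ 2) :
    IsGenSubgradientAt f ((1 / μ) • (z - x)) x := by
  intro ε hε
  rw [Metric.eventually_nhds_iff]
  refine ⟨2 * μ * ε, by positivity, fun y hy => ?_⟩
  have h1 := h y
  have key : ‖y - z‖ ^ 2 = ‖y - x‖ ^ 2 + 2 * ⟪y - x, x - z⟫ + ‖x - z‖ ^ 2 := by
    have hyz : y - z = (y - x) + (x - z) := by abel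
    rw [hyz, norm_add_sq_real]
  have hin : ⟪(1 / μ) • (z - x), y - x⟫ = (1 / μ) * ⟪z - x, y - x⟫ :=
    real_inner_smul_left _ _ _
  have hsym : ⟪z - x, y - x⟫ = -⟪y - x, x - z⟫ := by
    rw [real_inner_comm, show (x - z : EuclideanSpace ℝ (Fin n)) = -(z - x) by abel,
      inner_neg_right, neg_neg]
  have hdist : ‖y - x‖ < 2 * μ * ε := by
    rw [← dist_eq_norm]; exact hy
  have hnn : (0:ℝ) ≤ ‖y - x‖ := norm_nonneg _
  have hsq : ‖y - x‖ ^ 2 = ‖y - x‖ * ‖y - x‖ := by ring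
  rw [hin, hsym]
  rw [key] at h1
  have hμ' : 0 < 1 / (2 * μ) := by positivity
  have hb : 1 / (2 * μ) * ‖y - x‖ ^ 2 ≤ ε * ‖y - x‖ := by
    have h3 : 1 / (2 * μ) * ‖y - x‖ ≤ ε := by
      calc 1 / (2 * μ) * ‖y - x‖ ≤ 1 / (2 * μ) * (2 * μ * ε) :=
            mul_le_mul_of_nonneg_left (le_of_lt hdist) (le_of_lt hμ')
        _ = ε := by field_simp
    calc 1 / (2 * μ) * ‖y - x‖ ^ 2 = (1 / (2 * μ) * ‖y - x‖) * ‖y - x‖ := by ring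
      _ ≤ ε * ‖y - x‖ := mul_le_mul_of_nonneg_right h3 hnn
  have h2 : (1 / μ : ℝ) = 2 * (1 / (2 * μ)) := by field_simp
  rw [h2]
  ring_nf at h1 hb ⊢
  linarith

/-- If `zbar` is a stationary point of `Ψ_μ = M_{μφ} − M_{μg}` (i.e.
`∇Ψ_μ(zbar) = μ⁻¹(prox_{μg} zbar − prox_{μφ} zbar) = 0`), then `prox_{μφ} zbar = prox_{μg} zbar`,
the point `xbar := prox_{μφ} zbar` is a critical point of `Ψ = φ − g`
(`∂φ(xbar) ∩ ∂g(xbar) ≠ ∅`), and `Ψ(xbar) = Ψ_μ(zbar)`. -/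
theorem stmt8 {n : ℕ} (φ g : EuclideanSpace ℝ (Fin n) → ℝ) (mφ μ : ℝ)
    (hm : 0 < mφ) (hμ : 0 < μ) (hμm : μ < 1 / mφ)
    (hφclosed : LowerSemicontinuous φ)
    (hφweak : ConvexOn ℝ Set.univ (fun x => φ x + mφ / 2 * ‖x‖ ^ 2))
    (hgconv : ConvexOn ℝ Set.univ g) (hgclosed : LowerSemicontinuous g)
    (proxφ proxg : EuclideanSpace ℝ (Fin n) → EuclideanSpace ℝ (Fin n))
    (hproxφ : ∀ z y, φ (proxφ z) + 1 / (2 * μ) * ‖proxφ z - z‖ ^ 2 ≤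
      φ y + 1 / (2 * μ) * ‖y - z‖ ^ 2)
    (hproxg : ∀ z y, g (proxg z) + 1 / (2 * μ) * ‖proxg z - z‖ ^ 2 ≤
      g y + 1 / (2 * μ) * ‖y - z‖ ^ 2)
    (zbar : EuclideanSpace ℝ (Fin n))
    (hstat : (1 / μ) • (proxg zbar - proxφ zbar) = 0) :
    proxφ zbar = proxg zbar ∧
    (∃ ξ : EuclideanSpace ℝ (Fin n),
      IsGenSubgradientAt φ ξ (proxφ zbar) ∧ IsGenSubgradientAt g ξ (proxφ zbar)) ∧
    φ (proxφ zbar) - g (proxφ zbar) =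
      (φ (proxφ zbar) + 1 / (2 * μ) * ‖proxφ zbar - zbar‖ ^ 2) -
        (g (proxg zbar) + 1 / (2 * μ) * ‖proxg zbar - zbar‖ ^ 2) := by
  have heq : proxφ zbar = proxg zbar := by
    have hne : (1 / μ : ℝ) ≠ 0 := by positivity
    have := smul_eq_zero.mp hstat
    rcases this with h | h
    · exact absurd h hne
    · have : proxg zbar - proxφ zbar = 0 := h
      have := sub_eq_zero.mp this
      exact this.symm
  refine ⟨heq, ⟨(1 / μ) • (zbar - proxφ zbar), ?_, ?_⟩, ?_⟩
  · exact aux_subgrad φ μ hμ (proxφ zbar) zbar (hproxφ zbar)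
  · have := aux_subgrad g μ hμ (proxg zbar) zbar (hproxg zbar)
    rwa [← heq] at this
  · rw [← heq]; ring
end

section
/- Suppose x̄ is a critical point of Ψ = φ − g with ξ̄ ∈ ∂φ(x̄) ∩ ∂g(x̄), where φ is m_φ-weakly convex, g is proper closed convex, and 0 < μ < 1/m_φ. Then z̄ := x̄ + μξ̄ satisfies prox_{μφ}(z̄) = prox_{μg}(z̄) = x̄ and ∇Ψ_μ(z̄) = 0. -/
/-!
The subgradient condition `ξ̄ ∈ ∂φ(x̄)` says exactly that `0` is a Fréchet subgradient at `x̄` of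
the proximal objective `φ + (2μ)⁻¹‖· - z̄‖²`, since the quadratic term has gradient `-ξ̄` there.
For `μ m_φ < 1` this objective is `(μ⁻¹ - m_φ)`-strongly convex, so its Fréchet-stationary point
`x̄` is its unique global minimiser, and both proximal points equal `x̄`; the same argument applies
to `g` with `m = 0`.
-/

open scoped RealInnerProductSpace

open Set Filter Topology

lemma ConvexOn.isMinOn_of_forall_eventually_sub_le {E : Type*} [NormedAddCommGroup E]
    [NormedSpace ℝ E] {F : E → ℝ} (hF : ConvexOn ℝ univ F) {x : E}
    (h : ∀ ε > (0 : ℝ), ∀ᶠ y in 𝓝 x, F x - ε * ‖y - x‖ ≤ F y) : IsMinOn F univ x := by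
  intro y _
  refine le_of_forall_pos_le_add fun (δ : ℝ) hδ => ?_
  set ε := δ / (‖y - x‖ + 1) with hε_def
  have hε : 0 < ε := by positivity
  -- `x` locally minimises the convex function `F + ε‖· - x‖`, hence minimises it globally.
  have hloc : IsLocalMin (fun w => F w + ε * ‖w - x‖) x := by
    filter_upwards [h ε hε] with w hw
    simp only [sub_self, norm_zero, mul_zero, add_zero]
    linarith
  have hconv : ConvexOn ℝ univ (fun w => F w + ε * ‖w - x‖) := by
    have := ((convexOn_norm (E := E) convex_univ).translate_right (-x)).smul hε.le
    simp only [Function.comp_def, neg_add_eq_sub, preimage_univ] at this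
    exact hF.add this
  have hmin := IsMinOn.of_isLocalMin_of_convex_univ hloc hconv y
  have hsmall : ε * ‖y - x‖ ≤ δ := by
    rw [hε_def, div_mul_eq_mul_div, div_le_iff₀ (by positivity)]
    nlinarith [norm_nonneg (y - x)]
  simp only [sub_self, norm_zero, mul_zero, add_zero] at hmin
  linarith

section

variable {E : Type*} [NormedAddCommGroup E] [InnerProductSpace ℝ E]

lemma norm_sub_add_smul_sq_sub (μ : ℝ) (x y ξ : E) :
    ‖y - (x + μ • ξ)‖ ^ 2 - ‖x - (x + μ • ξ)‖ ^ 2 = ‖y - x‖ ^ 2 - 2 * μ * ⟪ξ, y - x⟫ := by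
  have hy : y - (x + μ • ξ) = (y - x) - μ • ξ := by abel
  rw [hy, sub_add_cancel_left, norm_neg, norm_sub_sq_real, real_inner_smul_right,
    real_inner_comm]
  ring

lemma forall_eventually_sub_le_add_sq_norm_sub {f : E → ℝ} {μ : ℝ} (hμ : 0 < μ) {x ξ : E}
    (hξ : ∀ ε > (0 : ℝ), ∀ᶠ y in 𝓝 x, f x + ⟪ξ, y - x⟫ - ε * ‖y - x‖ ≤ f y) :
    ∀ ε > (0 : ℝ), ∀ᶠ y in 𝓝 x,
      f x + 1 / (2 * μ) * ‖x - (x + μ • ξ)‖ ^ 2 - ε * ‖y - x‖ ≤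
        f y + 1 / (2 * μ) * ‖y - (x + μ • ξ)‖ ^ 2 := by
  intro ε hε
  filter_upwards [hξ ε hε] with y hy
  have hquad : 1 / (2 * μ) * ‖y - (x + μ • ξ)‖ ^ 2 - 1 / (2 * μ) * ‖x - (x + μ • ξ)‖ ^ 2 =
      1 / (2 * μ) * ‖y - x‖ ^ 2 - ⟪ξ, y - x⟫ := by
    rw [← mul_sub, norm_sub_add_smul_sq_sub]
    field_simp
  have : 0 ≤ 1 / (2 * μ) * ‖y - x‖ ^ 2 := by positivity
  linarith

lemma ConvexOn.strongConvexOn_add_sq_norm_sub {f : E → ℝ} {m : ℝ}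
    (hf : ConvexOn ℝ univ fun x => f x + m / 2 * ‖x‖ ^ 2) (μ : ℝ) (z : E) :
    StrongConvexOn univ (1 / μ - m) fun y => f y + 1 / (2 * μ) * ‖y - z‖ ^ 2 := by
  rw [strongConvexOn_iff_convex]
  have haff : ConvexOn ℝ univ fun y => -(1 / μ) * ⟪z, y⟫ + 1 / (2 * μ) * ‖z‖ ^ 2 :=
    (((-(1 / μ)) • innerₛₗ ℝ z).convexOn convex_univ).add_const _
  refine (hf.add haff).congr fun y _ => ?_
  simp only [Pi.add_apply]
  rw [norm_sub_sq_real, real_inner_comm]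
  ring

lemma eq_of_isMinOn_add_sq_norm_sub {f : E → ℝ} {m μ : ℝ} (hμ : 0 < μ) (hμm : μ * m < 1)
    (hf : ConvexOn ℝ univ fun x => f x + m / 2 * ‖x‖ ^ 2) {x ξ p : E}
    (hξ : ∀ ε > (0 : ℝ), ∀ᶠ y in 𝓝 x, f x + ⟪ξ, y - x⟫ - ε * ‖y - x‖ ≤ f y)
    (hp : ∀ y, f p + 1 / (2 * μ) * ‖p - (x + μ • ξ)‖ ^ 2 ≤
      f y + 1 / (2 * μ) * ‖y - (x + μ • ξ)‖ ^ 2) : p = x := by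
  have hmod : 0 < 1 / μ - m := by rw [sub_pos, lt_div_iff₀ hμ]; linarith
  have hstrict := (hf.strongConvexOn_add_sq_norm_sub μ (x + μ • ξ)).strictConvexOn hmod
  have hx := hstrict.convexOn.isMinOn_of_forall_eventually_sub_le
    (forall_eventually_sub_le_add_sq_norm_sub hμ hξ)
  exact hstrict.eq_of_isMinOn (fun y _ => hp y) hx trivial trivial

end

theorem stmt9_general {n : ℕ} (φ g : EuclideanSpace ℝ (Fin n) → ℝ) (mφ μ : ℝ)
    (hm : 0 < mφ) (hμ : 0 < μ) (hμm : μ < 1 / mφ)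
    (hφweak : ConvexOn ℝ Set.univ (fun x => φ x + mφ / 2 * ‖x‖ ^ 2))
    (hgconv : ConvexOn ℝ Set.univ g)
    (proxφ proxg : EuclideanSpace ℝ (Fin n) → EuclideanSpace ℝ (Fin n))
    (hproxφ : ∀ z y, φ (proxφ z) + 1 / (2 * μ) * ‖proxφ z - z‖ ^ 2 ≤
      φ y + 1 / (2 * μ) * ‖y - z‖ ^ 2)
    (hproxg : ∀ z y, g (proxg z) + 1 / (2 * μ) * ‖proxg z - z‖ ^ 2 ≤
      g y + 1 / (2 * μ) * ‖y - z‖ ^ 2)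
    (xbar xibar : EuclideanSpace ℝ (Fin n))
    (hξφ : IsGenSubgradientAt φ xibar xbar) (hξg : IsGenSubgradientAt g xibar xbar) :
    proxφ (xbar + μ • xibar) = xbar ∧ proxg (xbar + μ • xibar) = xbar ∧
    (1 / μ) • (proxg (xbar + μ • xibar) - proxφ (xbar + μ • xibar)) = 0 := by
  have hφ : proxφ (xbar + μ • xibar) = xbar :=
    eq_of_isMinOn_add_sq_norm_sub hμ ((lt_div_iff₀ hm).mp hμm) hφweak hξφ (hproxφ _)
  have hg : proxg (xbar + μ • xibar) = xbar :=
    eq_of_isMinOn_add_sq_norm_sub (m := 0) hμ (by simp) (by simpa using hgconv)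
      hξg (hproxg _)
  exact ⟨hφ, hg, by rw [hφ, hg, sub_self, smul_zero]⟩

/-- If `xbar` is a critical point of `Ψ = φ − g` with
`xibar ∈ ∂φ(xbar) ∩ ∂g(xbar)`, then `zbar := xbar + μ xibar` satisfies
`prox_{μφ}(zbar) = prox_{μg}(zbar) = xbar` and `∇Ψ_μ(zbar) = μ⁻¹(prox_{μg} zbar − prox_{μφ} zbar) = 0`. -/
theorem stmt9 {n : ℕ} (φ g : EuclideanSpace ℝ (Fin n) → ℝ) (mφ μ : ℝ)
    (hm : 0 < mφ) (hμ : 0 < μ) (hμm : μ < 1 / mφ)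
    (hφclosed : LowerSemicontinuous φ)
    (hφweak : ConvexOn ℝ Set.univ (fun x => φ x + mφ / 2 * ‖x‖ ^ 2))
    (hgconv : ConvexOn ℝ Set.univ g) (hgclosed : LowerSemicontinuous g)
    (proxφ proxg : EuclideanSpace ℝ (Fin n) → EuclideanSpace ℝ (Fin n))
    (hproxφ : ∀ z y, φ (proxφ z) + 1 / (2 * μ) * ‖proxφ z - z‖ ^ 2 ≤
      φ y + 1 / (2 * μ) * ‖y - z‖ ^ 2)
    (hproxg : ∀ z y, g (proxg z) + 1 / (2 * μ) * ‖proxg z - z‖ ^ 2 ≤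
      g y + 1 / (2 * μ) * ‖y - z‖ ^ 2)
    (xbar xibar : EuclideanSpace ℝ (Fin n))
    (hξφ : IsGenSubgradientAt φ xibar xbar) (hξg : IsGenSubgradientAt g xibar xbar) :
    proxφ (xbar + μ • xibar) = xbar ∧ proxg (xbar + μ • xibar) = xbar ∧
    (1 / μ) • (proxg (xbar + μ • xibar) - proxφ (xbar + μ • xibar)) = 0 :=
  stmt9_general φ g mφ μ hm hμ hμm hφweak hgconv proxφ proxg hproxφ hproxg xbar xibar hξφ hξg
end

section
/- Let g : ℝⁿ → ℝ be convex with ‖v‖ ≤ G for every subgradient v ∈ ∂g(x) at every x. Let F* := inf_x {Q(x) + h(x) − g(x)} > −∞ for some functions Q, h. Then for any μ > 0 and all (x, z), the potential L(x,z) := Q(x) + h(x) + (1/(2μ))‖x − z‖² − M_{μg}(z) satisfies L(x,z) ≥ F* − G²μ/2. -/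
/-!
Choosing `y = x` in the infimum gives `M_{μg}(z) ≤ g x + (1/(2μ))‖x - z‖²`, hence
`L(x,z) ≥ Q x + h x - g x ≥ F*`. In Lean the infimum is `0` unless the family is bounded
below, and that is where convexity enters: separating `(z, g z)` from the open strict
epigraph gives a continuous affine minorant of `g` at `z`, which the quadratic dominates.
-/

open scoped RealInnerProductSpace

open Set

variable {E : Type*} [NormedAddCommGroup E] [NormedSpace ℝ E]

theorem ConvexOn.exists_continuousLinearMap_add_le {f : E → ℝ} (hf : ConvexOn ℝ univ f)
    (hfc : Continuous f) (x : E) : ∃ φ : E →L[ℝ] ℝ, ∀ y, f x + φ (y - x) ≤ f y := by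
  have hopen : IsOpen {p : E × ℝ | p.1 ∈ univ ∧ f p.1 < p.2} := by
    simp only [mem_univ, true_and]
    exact isOpen_lt (hfc.comp continuous_fst) continuous_snd
  obtain ⟨ℓ, hℓ⟩ := geometric_hahn_banach_open_point hf.convex_strict_epigraph hopen
    (x := (x, f x)) (by simp)
  have hsplit : ∀ (w : E) (s : ℝ), ℓ (w, s) = ℓ (w, 0) + s * ℓ (0, 1) := fun w s => by
    rw [← smul_eq_mul, ← map_smul, ← map_add, Prod.smul_mk, smul_zero, smul_eq_mul, mul_one,
      Prod.mk_add_mk, add_zero, zero_add]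
  have hsep : ∀ y t, f y < t → ℓ (y - x, 0) + (t - f x) * ℓ (0, 1) < 0 := fun y t ht => by
    have := hℓ (y, t) ⟨mem_univ y, ht⟩
    rwa [← sub_neg, ← map_sub, Prod.mk_sub_mk, hsplit] at this
  have hc : ℓ (0, 1) < 0 := by simpa [Prod.mk_zero_zero] using hsep x (f x + 1) (by linarith)
  -- the separating hyperplane is not vertical; normalising its slope in `t` gives the minorant
  refine ⟨(-ℓ (0, 1))⁻¹ • ℓ.comp (.inl ℝ E ℝ), fun y => le_of_forall_gt fun t ht => ?_⟩
  simp only [smul_apply, ContinuousLinearMap.comp_apply,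
    ContinuousLinearMap.inl_apply, smul_eq_mul]
  rw [← lt_sub_iff_add_lt', inv_mul_lt_iff₀ (neg_pos.2 hc)]
  linarith [hsep y t ht]

theorem bddBelow_range_add_mul_sq_norm_sub {f : E → ℝ} {z : E} (φ : E →L[ℝ] ℝ)
    (hφ : ∀ y, f z + φ (y - z) ≤ f y) {c : ℝ} (hc : 0 < c) :
    BddBelow (range fun y => f y + c * ‖y - z‖ ^ 2) := by
  refine ⟨f z - ‖φ‖ ^ 2 / (4 * c), forall_mem_range.2 fun y => ?_⟩
  have hφy : -(‖φ‖ * ‖y - z‖) ≤ φ (y - z) :=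
    neg_le_of_abs_le ((Real.norm_eq_abs _).symm ▸ φ.le_opNorm (y - z))
  have hsq : -(‖φ‖ ^ 2 / (4 * c)) ≤ c * ‖y - z‖ ^ 2 - ‖φ‖ * ‖y - z‖ := by
    rw [neg_le_sub_iff_le_add, ← sub_nonneg]
    have : 0 ≤ (2 * c * ‖y - z‖ - ‖φ‖) ^ 2 / (4 * c) := by positivity
    convert this using 1
    field_simp
    ring
  linarith [hφ y]

theorem stmt11_general {n : ℕ} (g Q h : EuclideanSpace ℝ (Fin n) → ℝ) (G Fstar μ : ℝ)
    (hμ : 0 < μ)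
    (hgconv : ConvexOn ℝ Set.univ g)
    (hFstar : ∀ x, Fstar ≤ Q x + h x - g x) :
    ∀ x z : EuclideanSpace ℝ (Fin n),
      Fstar - G ^ 2 * μ / 2 ≤
        Q x + h x + 1 / (2 * μ) * ‖x - z‖ ^ 2 -
          ⨅ y : EuclideanSpace ℝ (Fin n), (g y + 1 / (2 * μ) * ‖y - z‖ ^ 2) := by
  intro x z
  have hgc : Continuous g := continuousOn_univ.mp (hgconv.continuousOn isOpen_univ)
  obtain ⟨φ, hφ⟩ := hgconv.exists_continuousLinearMap_add_le hgc z
  have hbdd := bddBelow_range_add_mul_sq_norm_sub φ hφ (by positivity : 0 < 1 / (2 * μ))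
  have henv_le : ⨅ y, (g y + 1 / (2 * μ) * ‖y - z‖ ^ 2) ≤ g x + 1 / (2 * μ) * ‖x - z‖ ^ 2 :=
    ciInf_le hbdd x
  have : 0 ≤ G ^ 2 * μ / 2 := by positivity
  linarith [hFstar x]

/-- If `g` is convex with all subgradients bounded by `G`, and
`F* ≤ Q x + h x − g x` for all `x`, then for any `μ > 0` the potential
`L(x,z) = Q x + h x + (1/(2μ))‖x − z‖² − M_{μg}(z)` is bounded below by `F* − G²μ/2`. -/
theorem stmt11 {n : ℕ} (g Q h : EuclideanSpace ℝ (Fin n) → ℝ) (G Fstar μ : ℝ)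
    (hμ : 0 < μ) (hG : 0 ≤ G)
    (hgconv : ConvexOn ℝ Set.univ g)
    (hsub : ∀ x v : EuclideanSpace ℝ (Fin n),
      (∀ y, g x + ⟪v, y - x⟫ ≤ g y) → ‖v‖ ≤ G)
    (hFstar : ∀ x, Fstar ≤ Q x + h x - g x) :
    ∀ x z : EuclideanSpace ℝ (Fin n),
      Fstar - G ^ 2 * μ / 2 ≤
        Q x + h x + 1 / (2 * μ) * ‖x - z‖ ^ 2 -
          ⨅ y : EuclideanSpace ℝ (Fin n), (g y + 1 / (2 * μ) * ‖y - z‖ ^ 2) :=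
  stmt11_general g Q h G Fstar μ hμ hgconv hFstar
end

section
/- Let Q : ℝⁿ → ℝ be L-smooth, h : ℝⁿ → ℝ ∪ {+∞} proper closed convex, μ > 0 with μL ≤ 1/4, and let z, x ∈ ℝⁿ, e ∈ ℝⁿ. Define x⁺ := prox_{μh}(z − μ(∇Q(x) + e)). Then Q(x⁺) + h(x⁺) + (1/(2μ))‖x⁺ − z‖² ≤ Q(x) + h(x) + (1/(2μ))‖x − z‖² − ((2μ)⁻¹ − L)/2 · ‖x⁺ − x‖² + μ‖e‖². -/
/-!
Since `x⁺` minimizes the `1/μ`-strongly convex function `h + ‖· − (z − μ(∇Q(x) + e))‖²/(2μ)`,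
comparing it with the points of the segment towards `x` gives the three-point inequality
`h(x⁺) + ⟪∇Q(x) + e, x⁺ − x⟫ + ‖x⁺ − z‖²/(2μ) ≤ h(x) + ‖x − z‖²/(2μ) − ‖x⁺ − x‖²/(2μ)`.
Add the descent lemma `Q(x⁺) ≤ Q(x) + ⟪∇Q(x), x⁺ − x⟫ + (L/2)‖x⁺ − x‖²` and Young's inequality
`⟪−e, x⁺ − x⟫ ≤ μ‖e‖² + ‖x⁺ − x‖²/(4μ)`.
-/

open Set Filter Topology
open scoped RealInnerProductSpace

theorem le_add_deriv_add_half_of_deriv_le {f f' : ℝ → ℝ} {K : ℝ}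
    (hf : ∀ t, HasDerivAt f (f' t) t) (hf' : ∀ t ∈ Ioo (0 : ℝ) 1, f' t ≤ f' 0 + K * t) :
    f 1 ≤ f 0 + f' 0 + K / 2 := by
  set g : ℝ → ℝ := fun t ↦ f t - t * f' 0 - K / 2 * t ^ 2
  have hg : ∀ t, HasDerivAt g (f' t - f' 0 - K * t) t := fun t ↦ by
    have := ((hf t).sub ((hasDerivAt_id' t).mul_const (f' 0))).sub
      ((hasDerivAt_pow 2 t).const_mul (K / 2))
    exact this.congr_deriv (by ring)
  have hanti : AntitoneOn g (Icc 0 1) := by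
    refine antitoneOn_of_hasDerivWithinAt_nonpos (convex_Icc 0 1)
      (fun t _ ↦ (hg t).continuousAt.continuousWithinAt) (fun t _ ↦ (hg t).hasDerivWithinAt) ?_
    rw [interior_Icc]
    intro t ht
    linarith [hf' t ht]
  have := hanti (left_mem_Icc.2 zero_le_one) (right_mem_Icc.2 zero_le_one) zero_le_one
  simp only [g] at this
  linarith

section InnerProductSpace

variable {E : Type*} [NormedAddCommGroup E] [InnerProductSpace ℝ E]

theorem le_add_inner_add_sq_of_gradient_lipschitz [CompleteSpace E] {Q : E → ℝ}
    {gradQ : E → E} {L : ℝ} (hQ : ∀ x, HasGradientAt Q (gradQ x) x)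
    (hQL : ∀ x y, ‖gradQ x - gradQ y‖ ≤ L * ‖x - y‖) (x y : E) :
    Q y ≤ Q x + ⟪gradQ x, y - x⟫ + L / 2 * ‖y - x‖ ^ 2 := by
  set d := y - x
  have hline : ∀ t : ℝ, HasDerivAt (fun s : ℝ ↦ Q (x + s • d)) ⟪gradQ (x + t • d), d⟫ t := by
    intro t
    have := (hQ (x + t • d)).hasFDerivAt.comp_hasDerivAt t
      (((hasDerivAt_id t).smul_const d).const_add x)
    exact this.congr_deriv (by simp)
  have hbound : ∀ t ∈ Ioo (0 : ℝ) 1,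
      ⟪gradQ (x + t • d), d⟫ ≤ ⟪gradQ (x + (0 : ℝ) • d), d⟫ + L * ‖d‖ ^ 2 * t := by
    intro t ht
    calc ⟪gradQ (x + t • d), d⟫ = ⟪gradQ x, d⟫ + ⟪gradQ (x + t • d) - gradQ x, d⟫ := by
          rw [inner_sub_left]; ring
      _ ≤ ⟪gradQ x, d⟫ + L * ‖t • d‖ * ‖d‖ := by
          gcongr
          exact (real_inner_le_norm _ _).trans
            (mul_le_mul_of_nonneg_right (by simpa using hQL (x + t • d) x) (norm_nonneg d))
      _ = ⟪gradQ (x + (0 : ℝ) • d), d⟫ + L * ‖d‖ ^ 2 * t := by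
          rw [norm_smul, Real.norm_of_nonneg ht.1.le, zero_smul, add_zero]; ring
  have := le_add_deriv_add_half_of_deriv_le hline hbound
  simp only [zero_smul, add_zero, one_smul, d, add_sub_cancel] at this
  linarith

theorem real_inner_le_mul_norm_sq_add {μ : ℝ} (hμ : 0 < μ) (u v : E) :
    ⟪u, v⟫ ≤ μ * ‖u‖ ^ 2 + (4 * μ)⁻¹ * ‖v‖ ^ 2 := by
  have h := norm_sub_sq_real ((2 * μ) • u) v
  rw [norm_smul, real_inner_smul_left, Real.norm_of_nonneg (by positivity)] at h
  have : 0 ≤ (4 * μ)⁻¹ * ‖(2 * μ) • u - v‖ ^ 2 := by positivity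
  rw [h] at this
  field_simp at this ⊢
  linarith

theorem ConvexOn.two_mul_inner_le_of_isMinOn_add_sq {s : Set E} {f : E → ℝ}
    (hf : ConvexOn ℝ s f) {c : ℝ} {w p : E}
    (hmin : IsMinOn (fun y ↦ f y + c * ‖y - w‖ ^ 2) s p) (hp : p ∈ s) {y : E} (hy : y ∈ s) :
    2 * c * ⟪w - p, y - p⟫ ≤ f y - f p := by
  have hsegment : ∀ t ∈ Ioc (0 : ℝ) 1,
      2 * c * ⟪w - p, y - p⟫ ≤ f y - f p + c * ‖y - p‖ ^ 2 * t := by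
    rintro t ⟨ht₀, ht₁⟩
    have hconv : f (p + t • (y - p)) ≤ (1 - t) * f p + t * f y := by
      have h := hf.2 hp hy (sub_nonneg.2 ht₁) ht₀.le (sub_add_cancel 1 t)
      rwa [show (1 - t) • p + t • y = p + t • (y - p) by module, smul_eq_mul, smul_eq_mul] at h
    have hle : f p + c * ‖p - w‖ ^ 2 ≤ f (p + t • (y - p)) + c * ‖p + t • (y - p) - w‖ ^ 2 :=
      hmin (hf.1.add_smul_sub_mem hp hy ⟨ht₀.le, ht₁⟩)
    have hexpand : ‖p + t • (y - p) - w‖ ^ 2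
        = ‖p - w‖ ^ 2 - 2 * t * ⟪w - p, y - p⟫ + t ^ 2 * ‖y - p‖ ^ 2 := by
      rw [show p + t • (y - p) - w = t • (y - p) - (w - p) by abel, norm_sub_sq_real,
        norm_smul, real_inner_smul_left, mul_pow, Real.norm_eq_abs, sq_abs, real_inner_comm,
        norm_sub_rev w p]
      ring
    refine le_of_mul_le_mul_left ?_ ht₀
    linear_combination hle + hconv + c * hexpand
  have hlim : Tendsto (fun t ↦ f y - f p + c * ‖y - p‖ ^ 2 * t) (𝓝[>] 0) (𝓝 (f y - f p)) :=
    ((continuous_const.add (continuous_const.mul continuous_id)).tendsto' 0 _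
      (by simp)).mono_left nhdsWithin_le_nhds
  exact ge_of_tendsto hlim (mem_of_superset (Ioc_mem_nhdsGT zero_lt_one) hsegment)

theorem ConvexOn.prox_three_point {s : Set E} {h : E → ℝ} (hh : ConvexOn ℝ s h) {μ : ℝ}
    (hμ : 0 < μ) {z v p : E}
    (hmin : IsMinOn (fun y ↦ h y + 1 / (2 * μ) * ‖y - (z - μ • v)‖ ^ 2) s p)
    (hp : p ∈ s) {x : E} (hx : x ∈ s) :
    h p + ⟪v, p - x⟫ + 1 / (2 * μ) * ‖p - z‖ ^ 2 ≤
      h x + 1 / (2 * μ) * ‖x - z‖ ^ 2 - 1 / (2 * μ) * ‖p - x‖ ^ 2 := by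
  have hopt := hh.two_mul_inner_le_of_isMinOn_add_sq hmin hp hx
  rw [show z - μ • v - p = (z - p) - μ • v by abel, inner_sub_left, real_inner_smul_left,
    mul_sub, show 2 * (1 / (2 * μ)) * (μ * ⟪v, x - p⟫) = ⟪v, x - p⟫ by field_simp] at hopt
  have hpolar := norm_sub_sq_real (x - p) (z - p)
  rw [sub_sub_sub_cancel_right, real_inner_comm] at hpolar
  rw [← neg_sub x p, inner_neg_right, norm_neg, norm_sub_rev p z]
  linear_combination hopt - 1 / (2 * μ) * hpolar

end InnerProductSpace

theorem stmt14_general {n : ℕ} (Q h : EuclideanSpace ℝ (Fin n) → ℝ)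
    (gradQ : EuclideanSpace ℝ (Fin n) → EuclideanSpace ℝ (Fin n)) (L μ : ℝ)
    (hμ : 0 < μ)
    (hQ : ∀ x, HasGradientAt Q (gradQ x) x)
    (hQL : ∀ x y, ‖gradQ x - gradQ y‖ ≤ L * ‖x - y‖)
    (hh : ConvexOn ℝ Set.univ h)
    (z x e xp : EuclideanSpace ℝ (Fin n))
    (hxp : ∀ y, h xp + 1 / (2 * μ) * ‖xp - (z - μ • (gradQ x + e))‖ ^ 2 ≤
      h y + 1 / (2 * μ) * ‖y - (z - μ • (gradQ x + e))‖ ^ 2) :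
    Q xp + h xp + 1 / (2 * μ) * ‖xp - z‖ ^ 2 ≤
      Q x + h x + 1 / (2 * μ) * ‖x - z‖ ^ 2 -
        ((2 * μ)⁻¹ - L) / 2 * ‖xp - x‖ ^ 2 + μ * ‖e‖ ^ 2 := by
  have hprox := hh.prox_three_point hμ (isMinOn_univ_iff.2 hxp) (mem_univ xp) (mem_univ x)
  have hdescent := le_add_inner_add_sq_of_gradient_lipschitz hQ hQL x xp
  have hyoung := real_inner_le_mul_norm_sq_add hμ (-e) (xp - x)
  rw [inner_add_left] at hprox
  rw [inner_neg_left, norm_neg] at hyoung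
  linear_combination hprox + hdescent + hyoung

/-- One-step descent of the stochastic proximal-gradient update
`x⁺ = prox_{μh}(z − μ(∇Q(x) + e))`:
`Q(x⁺) + h(x⁺) + (1/(2μ))‖x⁺ − z‖² ≤ Q(x) + h(x) + (1/(2μ))‖x − z‖²
  − ((2μ)⁻¹ − L)/2 ‖x⁺ − x‖² + μ‖e‖²`. -/
theorem stmt14 {n : ℕ} (Q h : EuclideanSpace ℝ (Fin n) → ℝ)
    (gradQ : EuclideanSpace ℝ (Fin n) → EuclideanSpace ℝ (Fin n)) (L μ : ℝ)
    (hL : 0 ≤ L) (hμ : 0 < μ) (hμL : μ * L ≤ 1 / 4)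
    (hQ : ∀ x, HasGradientAt Q (gradQ x) x)
    (hQL : ∀ x y, ‖gradQ x - gradQ y‖ ≤ L * ‖x - y‖)
    (hh : ConvexOn ℝ Set.univ h) (hhclosed : LowerSemicontinuous h)
    (z x e xp : EuclideanSpace ℝ (Fin n))
    (hxp : ∀ y, h xp + 1 / (2 * μ) * ‖xp - (z - μ • (gradQ x + e))‖ ^ 2 ≤
      h y + 1 / (2 * μ) * ‖y - (z - μ • (gradQ x + e))‖ ^ 2) :
    Q xp + h xp + 1 / (2 * μ) * ‖xp - z‖ ^ 2 ≤
      Q x + h x + 1 / (2 * μ) * ‖x - z‖ ^ 2 -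
        ((2 * μ)⁻¹ - L) / 2 * ‖xp - x‖ ^ 2 + μ * ‖e‖ ^ 2 :=
  stmt14_general Q h gradQ L μ hμ hQ hQL hh z x e xp hxp
end

section
/- Let g be proper closed convex and μ > 0, β ∈ (0,1], and let z⁺ := z − β(prox_{μg}(z) − x⁺) for given z, x⁺. Then (1/(2μ))‖x⁺ − z⁺‖² − M_{μg}(z⁺) ≤ (1/(2μ))‖x⁺ − z‖² − M_{μg}(z) − (1/μ)(β⁻¹ − 1/2)‖z⁺ − z‖². -/
open scoped RealInnerProductSpace

set_option maxHeartbeats 1000000 in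
/-- For `z⁺ = z − β(prox_{μg}(z) − x⁺)` with `β ∈ (0,1]`,
`(1/(2μ))‖x⁺ − z⁺‖² − M_{μg}(z⁺) ≤ (1/(2μ))‖x⁺ − z‖² − M_{μg}(z)
  − (1/μ)(β⁻¹ − 1/2)‖z⁺ − z‖²`, where `M_{μg}(w) = g(prox_{μg} w) + (1/(2μ))‖prox_{μg} w − w‖²`. -/
theorem stmt15 {n : ℕ} (g : EuclideanSpace ℝ (Fin n) → ℝ) (μ β : ℝ)
    (hμ : 0 < μ) (hβ0 : 0 < β) (hβ1 : β ≤ 1)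
    (hgconv : ConvexOn ℝ Set.univ g) (hgclosed : LowerSemicontinuous g)
    (proxg : EuclideanSpace ℝ (Fin n) → EuclideanSpace ℝ (Fin n))
    (hproxg : ∀ w y, g (proxg w) + 1 / (2 * μ) * ‖proxg w - w‖ ^ 2 ≤
      g y + 1 / (2 * μ) * ‖y - w‖ ^ 2)
    (z xp zp : EuclideanSpace ℝ (Fin n))
    (hzp : zp = z - β • (proxg z - xp)) :
    1 / (2 * μ) * ‖xp - zp‖ ^ 2 -
        (g (proxg zp) + 1 / (2 * μ) * ‖proxg zp - zp‖ ^ 2) ≤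
      1 / (2 * μ) * ‖xp - z‖ ^ 2 -
        (g (proxg z) + 1 / (2 * μ) * ‖proxg z - z‖ ^ 2) -
      (1 / μ) * (β⁻¹ - 1 / 2) * ‖zp - z‖ ^ 2 := by
  have hμ2 : (0:ℝ) < 2 * μ := by linarith
  set p := proxg z with hp
  set q := proxg zp with hq
  -- Key subgradient-type inequality from prox optimality + convexity of g
  have key : g p - g q ≤ (1/μ) * ⟪q - p, p - z⟫ := by
    have h : ∀ ε > (0:ℝ), g p ≤ (g q + (1/μ) * ⟪q - p, p - z⟫) + ε := by
      intro ε hε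
      set B : ℝ := ‖q - p‖ ^ 2 with hB
      have hB0 : (0:ℝ) ≤ B := by positivity
      set t : ℝ := min 1 (2 * μ * ε / (B + 1)) with ht
      have ht0 : 0 < t := lt_min one_pos (by positivity)
      have ht1 : t ≤ 1 := min_le_left _ _
      have hconv := hgconv.2 (Set.mem_univ p) (Set.mem_univ q)
        (by linarith : (0:ℝ) ≤ 1 - t) (le_of_lt ht0) (by ring)
      simp only [smul_eq_mul] at hconv
      have hpt := hproxg z ((1 - t) • p + t • q)
      have hv : (1 - t) • p + t • q - z = (p - z) + t • (q - p) := by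
        rw [smul_sub, sub_smul, one_smul]; abel
      have hnorm : ‖(p - z) + t • (q - p)‖ ^ 2
          = ‖p - z‖ ^ 2 + 2 * t * ⟪q - p, p - z⟫ + t ^ 2 * B := by
        rw [norm_add_sq_real, real_inner_smul_right, norm_smul, hB,
          Real.norm_eq_abs, mul_pow, sq_abs, real_inner_comm]
        ring
      rw [hv, hnorm] at hpt
      rw [← hp] at hpt
      have h1 : g p + 1 / (2*μ) * ‖p - z‖ ^ 2 ≤ (1 - t) * g p + t * g q
          + 1 / (2*μ) * (‖p - z‖ ^ 2 + 2 * t * ⟪q - p, p - z⟫ + t ^ 2 * B) :=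
        le_trans hpt (by linarith)
      have htmul : t * g p ≤ t * (g q + (1/μ) * ⟪q - p, p - z⟫ + t * B / (2 * μ)) := by
        have hmu : (1:ℝ)/μ = 2 * (1/(2*μ)) := by field_simp
        rw [hmu]
        have hring : t * (g q + 2 * (1/(2*μ)) * ⟪q - p, p - z⟫ + t * B / (2 * μ))
            = ((1 - t) * g p + t * g q
              + 1 / (2*μ) * (‖p - z‖ ^ 2 + 2 * t * ⟪q - p, p - z⟫ + t ^ 2 * B))
              - (g p + 1 / (2*μ) * ‖p - z‖ ^ 2) + t * g p := by ring
        rw [hring]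
        linarith [h1]
      have hdiv := le_of_mul_le_mul_left htmul ht0
      have hbound : t * B / (2 * μ) ≤ ε := by
        rw [div_le_iff₀ hμ2]
        have h2 : t ≤ 2 * μ * ε / (B + 1) := min_le_right _ _
        have h3 : t * (B + 1) ≤ 2 * μ * ε := by
          rw [← le_div_iff₀ (by positivity : (0:ℝ) < B + 1)]; exact h2
        nlinarith
      linarith
    have := le_of_forall_pos_le_add h
    linarith
  -- Exact algebraic identity reducing the goal
  have eqn : (1 / (2 * μ) * ‖xp - zp‖ ^ 2 - (g q + 1 / (2 * μ) * ‖q - zp‖ ^ 2))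
      - (1 / (2 * μ) * ‖xp - z‖ ^ 2 - (g p + 1 / (2 * μ) * ‖p - z‖ ^ 2)
        - (1 / μ) * (β⁻¹ - 1 / 2) * ‖zp - z‖ ^ 2)
      = (g p - g q - (1/μ) * ⟪q - p, p - z⟫)
        - (1 / (2 * μ)) * ‖(q - p) + β • (p - xp)‖ ^ 2 := by
    have hs : q - zp = ((q - p) + β • (p - xp)) + (p - z) := by
      rw [hzp]; abel
    have hxpz : xp - zp = (xp - z) + β • (p - xp) := by
      rw [hzp]; abel
    have hzz : zp - z = -(β • (p - xp)) := by
      rw [hzp]; abel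
    rw [hs, hxpz, hzz, norm_neg]
    rw [norm_add_sq_real (xp - z) (β • (p - xp)),
      norm_add_sq_real ((q - p) + β • (p - xp)) (p - z)]
    rw [inner_add_left (q - p) (β • (p - xp)) (p - z),
      real_inner_smul_left (p - xp) (p - z) β,
      real_inner_smul_right (xp - z) (p - xp) β,
      norm_smul β (p - xp)]
    have hrel1 : ⟪p - xp, p - z⟫ = ‖p - xp‖ ^ 2 + ⟪p - xp, xp - z⟫ := by
      have : (p : EuclideanSpace ℝ (Fin n)) - z = (p - xp) + (xp - z) := by abel
      rw [this, inner_add_right, real_inner_self_eq_norm_sq]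
    have hrel2 : ⟪xp - z, p - xp⟫ = ⟪p - xp, xp - z⟫ := real_inner_comm _ _
    rw [hrel1, hrel2, Real.norm_eq_abs, mul_pow, sq_abs]
    field_simp
    ring
  have hfinal : (0:ℝ) ≤ (1 / (2 * μ)) * ‖(q - p) + β • (p - xp)‖ ^ 2 := by positivity
  linarith [eqn, key, hfinal]
end
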